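/- Let A, B ∈ ℂ with A(A+B) ≠ 0, let (a₃, a₄, a₅, θ) ∈ ℂ⁴ with a₃ ≠ 0 and Δ₄ := a₄ + 2a₃² ≠ 0, and let (a₃', a₄', a₅', θ') = S_{A,B}(a₃, a₄, a₅, θ). Then, with Δ₄' := a₄' + 2a₃'², Δ₅ := a₅ − 5a₃³, Δ₅' := a₅' − 5a₃'³, Θ₅ := θ − a₅, Θ₅' := θ' − a₅': a₃(Δ₅ + 5a₃Δ₄)/Δ₄² = a₃'(Δ₅' + 5a₃'Δ₄')/Δ₄'² and a₃³Θ₅/Δ₄³ = a₃'³Θ₅'/Δ₄'³. -/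

import Mathlib

noncomputable def S (A B : ℂ) (p : ℂ × ℂ × ℂ × ℂ) : ℂ × ℂ × ℂ × ℂ :=
  let a3 := p.1
  let a4 := p.2.1
  let a5 := p.2.2.1
  let th := p.2.2.2
  let a3' := (A + B) * a3 / A ^ 2
  let a4' := ((A + B) * a4 - 2 * A * B * a3 * a3') / A ^ 3
  (a3', a4',
   ((A + B) * a5 - (2 * A * B * a4 + B ^ 2 * a3 ^ 2) * a3' - 3 * A ^ 2 * B * a3 * a4') / A ^ 4,
   (A * th + B * a5 - (2 * A * B * a4 + B ^ 2 * a3 ^ 2) * a3' - 3 * A ^ 2 * B * a3 * a4') / A ^ 4)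

theorem S_U1_invariants (A B : ℂ) (h : A * (A + B) ≠ 0) (a₃ a₄ a₅ θ : ℂ)
    (h3 : a₃ ≠ 0) (h4 : a₄ + 2 * a₃ ^ 2 ≠ 0)
    (a₃' a₄' a₅' θ' : ℂ) (heq : (a₃', a₄', a₅', θ') = S A B (a₃, a₄, a₅, θ)) :
    a₃ * ((a₅ - 5 * a₃ ^ 3) + 5 * a₃ * (a₄ + 2 * a₃ ^ 2)) / (a₄ + 2 * a₃ ^ 2) ^ 2
      = a₃' * ((a₅' - 5 * a₃' ^ 3) + 5 * a₃' * (a₄' + 2 * a₃' ^ 2)) / (a₄' + 2 * a₃' ^ 2) ^ 2 ∧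
    a₃ ^ 3 * (θ - a₅) / (a₄ + 2 * a₃ ^ 2) ^ 3
      = a₃' ^ 3 * (θ' - a₅') / (a₄' + 2 * a₃' ^ 2) ^ 3 := by
  have hA : A ≠ 0 := fun hA => h (by simp [hA])
  have hAB : A + B ≠ 0 := fun hAB => h (by simp [hAB])
  simp only [S, Prod.mk.injEq] at heq
  obtain ⟨e3, e4, e5, et⟩ := heq
  have e4' : a₄' = (A + B) * (A * a₄ - 2 * B * a₃ ^ 2) / A ^ 4 := by
    rw [e4, div_eq_div_iff (pow_ne_zero 3 hA) (pow_ne_zero 4 hA)]; field_simp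
  have e5' : a₅' = (A + B) * (A ^ 2 * a₅ - 5 * A * B * a₃ * a₄ + 5 * B ^ 2 * a₃ ^ 3) / A ^ 6 := by
    rw [e5, div_eq_div_iff (pow_ne_zero 4 hA) (pow_ne_zero 6 hA)]; field_simp; ring
  have et' : θ' = (A ^ 3 * θ + A ^ 2 * B * a₅ - (A + B) * (2 * A * B * a₄ + B ^ 2 * a₃ ^ 2) * a₃
      - 3 * B * (A + B) * a₃ * (A * a₄ - 2 * B * a₃ ^ 2)) / A ^ 6 := by
    rw [et, div_eq_div_iff (pow_ne_zero 4 hA) (pow_ne_zero 6 hA)]; field_simp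
  have key : a₄' + 2 * a₃' ^ 2 = (A + B) * (a₄ + 2 * a₃ ^ 2) / A ^ 3 := by
    rw [e4, e3]; field_simp; ring
  have num1 : a₅' - 5 * a₃' ^ 3 + 5 * a₃' * (a₄' + 2 * a₃' ^ 2)
      = (A + B) * (a₅ + 5 * a₃ * a₄ + 5 * a₃ ^ 3) / A ^ 4 := by
    rw [key, e5', e3]; field_simp; ring
  have numt : θ' - a₅' = (θ - a₅) / A ^ 3 := by
    rw [et', e5', div_sub_div_same, div_eq_div_iff (pow_ne_zero 6 hA) (pow_ne_zero 3 hA)]; ring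
  rw [num1, numt, key, e3]
  constructor
  · rw [div_eq_div_iff (pow_ne_zero 2 h4)
      (pow_ne_zero 2 (div_ne_zero (mul_ne_zero hAB h4) (pow_ne_zero 3 hA)))]
    field_simp
    ring
  · rw [div_eq_div_iff (pow_ne_zero 3 h4)
      (pow_ne_zero 3 (div_ne_zero (mul_ne_zero hAB h4) (pow_ne_zero 3 hA)))]
    field_simp
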